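/- arXiv:1010.3267 — 5 statements merged into one kernel-verified Lean document; each statement's English description precedes it below -/
import Mathlib

section
/- For every x > 0, the Mills ratio of the standard normal distribution admits the representation m(x) = 2∫₀^∞ (x/(x² + t²)) φ(t) dt, where φ(t) = e^{-t²/2}/√(2π). -/
/-!
Write `x / (x² + t²) = ∫₀^∞ x e^{-(x² + t²) s} ds` and swap the two integrals (the integrand
is nonnegative). The `t`-integral is then Gaussian,
`∫₀^∞ e^{-(s + 1/2) t²} dt = √(π / (s + 1/2)) / 2`, and the substitutions `s = (u² - 1) / 2`,
`v = x u` turn the remaining `s`-integral into `√(2π) / 2 · e^{x²/2} ∫ₓ^∞ e^{-v²/2} dv`,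
which is `√(2π) / 2` times the Mills ratio.
-/

/-- The standard normal probability density function. -/
noncomputable def stdNormalPDF (t : ℝ) : ℝ := Real.exp (-t ^ 2 / 2) / Real.sqrt (2 * Real.pi)

/-- The Mills ratio of the standard normal distribution: survival function over density. -/
noncomputable def millsRatio (x : ℝ) : ℝ := (∫ t in Set.Ioi x, stdNormalPDF t) / stdNormalPDF x

open Real MeasureTheory Set

theorem div_eq_integral_mul_exp_neg_mul_Ioi (c : ℝ) {a : ℝ} (ha : 0 < a) :
    c / a = ∫ s in Ioi (0 : ℝ), c * exp (-a * s) := by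
  rw [integral_const_mul, integral_exp_mul_Ioi (neg_lt_zero.2 ha), mul_zero, exp_zero,
    neg_div_neg_eq, div_eq_mul_one_div]

theorem div_sq_add_sq_mul_exp_neg_sq_eq_integral {x : ℝ} (hx : x ≠ 0) (t : ℝ) :
    x / (x ^ 2 + t ^ 2) * exp (-t ^ 2 / 2)
      = ∫ s in Ioi (0 : ℝ), x * exp (-(x ^ 2 + t ^ 2) * s) * exp (-t ^ 2 / 2) := by
  rw [integral_mul_const, ← div_eq_integral_mul_exp_neg_mul_Ioi x (by positivity)]

theorem integrable_div_sq_add_sq_mul_exp_neg_sq {x : ℝ} (hx : 0 < x) :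
    Integrable fun t : ℝ ↦ x / (x ^ 2 + t ^ 2) * exp (-t ^ 2 / 2) := by
  refine ((integrable_exp_neg_mul_sq one_half_pos).const_mul x⁻¹).mono' (by fun_prop)
    (ae_of_all _ fun t ↦ ?_)
  have hle : x / (x ^ 2 + t ^ 2) ≤ x⁻¹ := by
    rw [div_le_iff₀ (by positivity), inv_mul_eq_div, le_div_iff₀ hx]
    nlinarith [sq_nonneg t]
  rw [norm_of_nonneg (by positivity), show -t ^ 2 / 2 = -(1 / 2) * t ^ 2 by ring]
  gcongr

theorem integrable_mul_exp_neg_sq_add_sq_mul_mul_exp_neg_sq {x : ℝ} (hx : 0 < x) :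
    Integrable (fun p : ℝ × ℝ ↦ x * exp (-(x ^ 2 + p.1 ^ 2) * p.2) * exp (-p.1 ^ 2 / 2))
      ((volume.restrict (Ioi 0)).prod (volume.restrict (Ioi 0))) := by
  refine (integrable_prod_iff (by fun_prop)).2 ⟨ae_of_all _ fun t ↦ ?_, ?_⟩
  · have hpos : 0 < x ^ 2 + t ^ 2 := by positivity
    dsimp only
    exact ((exp_neg_integrableOn_Ioi 0 hpos).const_mul x).mul_const _
  · have hnonneg (t s : ℝ) : 0 ≤ x * exp (-(x ^ 2 + t ^ 2) * s) * exp (-t ^ 2 / 2) := by positivity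
    simp only [fun t s ↦ norm_of_nonneg (hnonneg t s),
      ← div_sq_add_sq_mul_exp_neg_sq_eq_integral hx.ne']
    exact (integrable_div_sq_add_sq_mul_exp_neg_sq hx).integrableOn

theorem integral_Ioi_exp_neg_add_sq_mul_mul_exp_neg_sq (c s : ℝ) :
    ∫ t in Ioi (0 : ℝ), exp (-(c + t ^ 2) * s) * exp (-t ^ 2 / 2)
      = exp (-c * s) * (√(π / (s + 1 / 2)) / 2) := by
  have h : ∀ t : ℝ, exp (-(c + t ^ 2) * s) * exp (-t ^ 2 / 2)
      = exp (-c * s) * exp (-(s + 1 / 2) * t ^ 2) := fun t ↦ by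
    rw [← exp_add, ← exp_add]; ring_nf
  simp only [h, integral_const_mul, integral_gaussian_Ioi]

theorem integral_Ioi_one_mul_comp_sq_sub_one_div_two (g : ℝ → ℝ) :
    ∫ u in Ioi (1 : ℝ), u * g ((u ^ 2 - 1) / 2) = ∫ s in Ioi (0 : ℝ), g s := by
  set f : ℝ → ℝ := fun u ↦ (u ^ 2 - 1) / 2
  have hf' : ∀ u ∈ Ioi (1 : ℝ), HasDerivWithinAt f u (Ioi 1) u := fun u _ ↦ by
    simpa using (((hasDerivAt_pow 2 u).sub_const 1).div_const 2).hasDerivWithinAt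
  have hmono : StrictMonoOn f (Ioi 1) := fun a ha b _ hab ↦ by
    have : a ^ 2 < b ^ 2 := pow_lt_pow_left₀ hab (by linarith [mem_Ioi.1 ha]) two_ne_zero
    simp only [f]; linarith
  have himage : f '' Ioi 1 = Ioi 0 := by
    refine Subset.antisymm (image_subset_iff.2 fun u (hu : 1 < u) ↦ ?_) fun s (hs : 0 < s) ↦ ?_
    · show 0 < (u ^ 2 - 1) / 2
      nlinarith
    · refine ⟨√(2 * s + 1), ?_, ?_⟩
      · exact (lt_sqrt zero_le_one).2 (by linarith)
      · simp only [f]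
        rw [sq_sqrt (by linarith)]
        ring
  rw [← himage, integral_image_eq_integral_abs_deriv_smul measurableSet_Ioi hf' hmono.injOn]
  refine setIntegral_congr_fun measurableSet_Ioi fun u (hu : 1 < u) ↦ ?_
  rw [smul_eq_mul, abs_of_pos (by linarith)]

theorem integral_Ioi_div_sq_add_sq_mul_exp_neg_sq {x : ℝ} (hx : 0 < x) :
    ∫ t in Ioi (0 : ℝ), x / (x ^ 2 + t ^ 2) * exp (-t ^ 2 / 2)
      = √(2 * π) / 2 * exp (x ^ 2 / 2) * ∫ v in Ioi x, exp (-v ^ 2 / 2) := by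
  calc ∫ t in Ioi (0 : ℝ), x / (x ^ 2 + t ^ 2) * exp (-t ^ 2 / 2)
      = ∫ t in Ioi (0 : ℝ), ∫ s in Ioi (0 : ℝ),
          x * exp (-(x ^ 2 + t ^ 2) * s) * exp (-t ^ 2 / 2) := by
        simp only [div_sq_add_sq_mul_exp_neg_sq_eq_integral hx.ne']
    _ = ∫ s in Ioi (0 : ℝ), ∫ t in Ioi (0 : ℝ),
          x * exp (-(x ^ 2 + t ^ 2) * s) * exp (-t ^ 2 / 2) :=
        integral_integral_swap (integrable_mul_exp_neg_sq_add_sq_mul_mul_exp_neg_sq hx)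
    _ = ∫ s in Ioi (0 : ℝ), x * (exp (-x ^ 2 * s) * (√(π / (s + 1 / 2)) / 2)) := by
        simp only [mul_assoc, integral_const_mul,
          integral_Ioi_exp_neg_add_sq_mul_mul_exp_neg_sq]
    _ = ∫ u in Ioi (1 : ℝ), u * (x * (exp (-x ^ 2 * ((u ^ 2 - 1) / 2))
          * (√(π / ((u ^ 2 - 1) / 2 + 1 / 2)) / 2))) :=
        (integral_Ioi_one_mul_comp_sq_sub_one_div_two _).symm
    _ = ∫ u in Ioi (1 : ℝ),
          x * (√(2 * π) / 2 * exp (x ^ 2 / 2)) * exp (-(x * u) ^ 2 / 2) := by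
        refine setIntegral_congr_fun measurableSet_Ioi fun u (hu : 1 < u) ↦ ?_
        have hu₀ : 0 < u := one_pos.trans hu
        have hsqrt : √(π / ((u ^ 2 - 1) / 2 + 1 / 2)) = √(2 * π) / u := by
          rw [show π / ((u ^ 2 - 1) / 2 + 1 / 2) = 2 * π / u ^ 2 by field_simp; ring,
            sqrt_div' _ (sq_nonneg u), sqrt_sq hu₀.le]
        have hexp : exp (-x ^ 2 * ((u ^ 2 - 1) / 2))
            = exp (x ^ 2 / 2) * exp (-(x * u) ^ 2 / 2) := by
          rw [← exp_add]; ring_nf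
        rw [hsqrt, hexp]
        field_simp
    _ = √(2 * π) / 2 * exp (x ^ 2 / 2) * ∫ v in Ioi x, exp (-v ^ 2 / 2) := by
        rw [integral_const_mul, integral_comp_mul_left_Ioi (fun v ↦ exp (-v ^ 2 / 2)) 1 hx,
          mul_one, smul_eq_mul]
        field_simp

theorem millsRatio_eq_exp_mul_integral (x : ℝ) :
    millsRatio x = exp (x ^ 2 / 2) * ∫ t in Ioi x, exp (-t ^ 2 / 2) := by
  simp only [millsRatio, stdNormalPDF]
  rw [integral_div, div_div_div_cancel_right₀ (by positivity),
    neg_div, exp_neg, div_inv_eq_mul, mul_comm]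

/-- For every `x > 0`, the Mills ratio of the standard normal distribution admits the
representation `m(x) = 2 ∫₀^∞ (x/(x² + t²)) φ(t) dt`. -/
theorem millsRatio_eq_two_mul_integral (x : ℝ) (hx : 0 < x) :
    millsRatio x = 2 * ∫ t in Set.Ioi (0 : ℝ), x / (x ^ 2 + t ^ 2) * stdNormalPDF t := by
  simp only [stdNormalPDF, ← mul_div_assoc, integral_div]
  rw [millsRatio_eq_exp_mul_integral, integral_Ioi_div_sq_add_sq_mul_exp_neg_sq hx]
  field_simp
end

section
/- For every x > 0, the function x ↦ m(√x)/√x of the Mills ratio of the standard normal law is a Stieltjes transform; explicitly, m(√x)/√x = (1/√(2π)) ∫₀^∞ (1/(x + s)) · (e^{-s/2}/√s) ds for all x > 0. -/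
open MeasureTheory Real Set

lemma integral_exp_neg_mul_Ioi_zero {c : ℝ} (hc : 0 < c) :
    ∫ v in Ioi (0 : ℝ), exp (-c * v) = 1 / c := by
  rw [integral_exp_mul_Ioi (neg_neg_of_pos hc), mul_zero, exp_zero, div_neg, neg_div, neg_neg]

lemma integral_exp_neg_mul_div_sqrt_Ioi {r : ℝ} (hr : 0 < r) :
    ∫ s in Ioi (0 : ℝ), exp (-r * s) / √s = √(π / r) := by
  have hΓ := integral_rpow_mul_exp_neg_mul_Ioi one_half_pos hr
  rw [Gamma_one_half_eq, ← sqrt_eq_rpow, sqrt_div' _ hr.le, sqrt_one] at hΓ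
  rw [sqrt_div' _ hr.le]
  convert hΓ using 1
  · refine setIntegral_congr_fun measurableSet_Ioi fun s (hs : 0 < s) => ?_
    rw [sqrt_eq_rpow, show (1 / 2 : ℝ) - 1 = -(1 / 2) by norm_num, rpow_neg hs.le, neg_mul]
    ring
  · field_simp

lemma integral_exp_neg_mul_mul_exp_neg_half_div_sqrt_Ioi {v : ℝ} (hv : 0 < 1 + 2 * v) :
    ∫ s in Ioi 0, exp (-s * v) * (exp (-s / 2) / √s) = √(2 * π) / √(1 + 2 * v) := by
  calc ∫ s in Ioi 0, exp (-s * v) * (exp (-s / 2) / √s)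
      = ∫ s in Ioi 0, exp (-(v + 1 / 2) * s) / √s := by
        congr 1 with s
        rw [← mul_div_assoc, ← exp_add]
        ring_nf
    _ = √(2 * π) / √(1 + 2 * v) := by
        rw [integral_exp_neg_mul_div_sqrt_Ioi (by linarith), ← sqrt_div' _ hv.le]
        congr 1
        field_simp
        ring

lemma integrableOn_exp_neg_half_div_sqrt :
    IntegrableOn (fun s : ℝ => exp (-s / 2) / √s) (Ioi 0) := by
  refine (integrableOn_rpow_mul_exp_neg_mul_rpow (s := -1 / 2) (p := 1) (b := 1 / 2)
    (by norm_num) one_pos one_half_pos).congr_fun (fun s (hs : 0 < s) => ?_) measurableSet_Ioi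
  dsimp only
  rw [rpow_one, sqrt_eq_rpow, neg_div, rpow_neg hs.le]
  ring_nf

theorem integral_Ioi_one_div_add_smul_eq_integral_laplace {E : Type*} [NormedAddCommGroup E]
    [NormedSpace ℝ E] [CompleteSpace E] {f : ℝ → E} (hf : IntegrableOn f (Ioi 0)) {x : ℝ}
    (hx : 0 < x) :
    ∫ s in Ioi 0, (1 / (x + s)) • f s =
      ∫ v in Ioi 0, exp (-x * v) • ∫ s in Ioi 0, exp (-s * v) • f s := by
  have hF : Integrable (Function.uncurry fun s v => exp (-(x + s) * v) • f s)
      ((volume.restrict (Ioi 0)).prod (volume.restrict (Ioi 0))) := by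
    refine (hf.norm.mul_prod (exp_neg_integrableOn_Ioi 0 hx)).mono' ?_ ?_
    · exact (continuous_exp.comp (by fun_prop)).aestronglyMeasurable.smul hf.1.comp_fst
    · rw [Measure.prod_restrict]
      refine (ae_restrict_iff' (measurableSet_Ioi.prod measurableSet_Ioi)).2
        (Filter.Eventually.of_forall ?_)
      rintro ⟨s, v⟩ ⟨hs : 0 < s, hv : 0 < v⟩
      dsimp only [Function.uncurry_apply_pair]
      rw [norm_smul, norm_of_nonneg (exp_pos _).le, mul_comm]
      gcongr
      nlinarith
  calc ∫ s in Ioi 0, (1 / (x + s)) • f s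
      = ∫ s in Ioi 0, ∫ v in Ioi 0, exp (-(x + s) * v) • f s := by
        refine setIntegral_congr_fun measurableSet_Ioi fun s (hs : 0 < s) => ?_
        rw [integral_smul_const, integral_exp_neg_mul_Ioi_zero (by positivity)]
    _ = ∫ v in Ioi 0, ∫ s in Ioi 0, exp (-(x + s) * v) • f s := integral_integral_swap hF
    _ = ∫ v in Ioi 0, exp (-x * v) • ∫ s in Ioi 0, exp (-s * v) • f s := by
        congr 1 with v
        rw [← integral_smul]
        congr 1 with s
        rw [smul_smul, ← exp_add]
        ring_nf

lemma image_sqrt_mul_sqrt_one_add_two_mul_Ioi {x : ℝ} (hx : 0 < x) :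
    (fun v => √x * √(1 + 2 * v)) '' Ioi 0 = Ioi √x := by
  have hsx := sqrt_pos.2 hx
  ext t
  constructor
  · rintro ⟨v, hv : 0 < v, rfl⟩
    exact lt_mul_right hsx ((lt_sqrt zero_le_one).2 (by linarith))
  · intro (ht : √x < t)
    refine ⟨((t / √x) ^ 2 - 1) / 2, ?_, ?_⟩
    · have : 1 < t / √x := (one_lt_div hsx).2 ht
      exact mem_Ioi.2 (by nlinarith)
    · dsimp only
      rw [show 1 + 2 * (((t / √x) ^ 2 - 1) / 2) = (t / √x) ^ 2 by ring,
        sqrt_sq (div_pos (hsx.trans ht) hsx).le]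
      field_simp

lemma integral_exp_neg_sq_half_Ioi_sqrt {x : ℝ} (hx : 0 < x) :
    ∫ t in Ioi √x, exp (-t ^ 2 / 2) =
      √x * exp (-x / 2) * ∫ v in Ioi 0, exp (-x * v) / √(1 + 2 * v) := by
  have hderiv : ∀ v ∈ Ioi (0 : ℝ), HasDerivWithinAt (fun v => √x * √(1 + 2 * v))
      (√x / √(1 + 2 * v)) (Ioi 0) v := fun v (hv : 0 < v) => by
    have hlin : HasDerivAt (fun v => 1 + 2 * v) 2 v := by
      simpa using ((hasDerivAt_id v).const_mul 2).const_add 1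
    refine ((hlin.sqrt (by positivity)).const_mul √x).hasDerivWithinAt.congr_deriv ?_
    field_simp
  have hmono : StrictMonoOn (fun v => √x * √(1 + 2 * v)) (Ioi 0) :=
    fun v (hv : 0 < v) w _ hvw =>
      mul_lt_mul_of_pos_left (sqrt_lt_sqrt (by positivity) (by linarith)) (sqrt_pos.2 hx)
  rw [← image_sqrt_mul_sqrt_one_add_two_mul_Ioi hx,
    integral_image_eq_integral_abs_deriv_smul measurableSet_Ioi hderiv hmono.injOn,
    ← integral_const_mul]
  refine setIntegral_congr_fun measurableSet_Ioi fun v (hv : 0 < v) => ?_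
  rw [smul_eq_mul, abs_of_pos (by positivity), mul_pow, sq_sqrt hx.le, sq_sqrt (by positivity),
    show -(x * (1 + 2 * v)) / 2 = -x / 2 + -x * v by ring, exp_add]
  ring

theorem millsRatio_sqrt_div_sqrt_eq_integral {x : ℝ} (hx : 0 < x) :
    millsRatio √x / √x = ∫ v in Ioi 0, exp (-x * v) / √(1 + 2 * v) := by
  simp only [millsRatio, stdNormalPDF]
  rw [integral_div, integral_exp_neg_sq_half_Ioi_sqrt hx, sq_sqrt hx.le]
  have := sqrt_pos.2 hx
  field_simp

/-- For every `x > 0`, the function `x ↦ m(√x)/√x` of the Mills ratio of the standard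
normal law is a Stieltjes transform; explicitly,
`m(√x)/√x = (1/√(2π)) ∫₀^∞ (1/(x + s)) · (e^{-s/2}/√s) ds`. -/
theorem millsRatio_sqrt_div_sqrt_stieltjes (x : ℝ) (hx : 0 < x) :
    millsRatio (Real.sqrt x) / Real.sqrt x =
      (1 / Real.sqrt (2 * Real.pi)) *
        ∫ s in Set.Ioi (0 : ℝ), (1 / (x + s)) * (Real.exp (-s / 2) / Real.sqrt s) := by
  have hstieltjes :=
    integral_Ioi_one_div_add_smul_eq_integral_laplace integrableOn_exp_neg_half_div_sqrt hx
  simp only [smul_eq_mul] at hstieltjes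
  rw [millsRatio_sqrt_div_sqrt_eq_integral hx, hstieltjes, ← integral_const_mul]
  refine setIntegral_congr_fun measurableSet_Ioi fun v (hv : 0 < v) => ?_
  rw [integral_exp_neg_mul_mul_exp_neg_half_div_sqrt_Ioi (by positivity)]
  have := sqrt_pos.2 (show 0 < 2 * π by positivity)
  field_simp
end

section
/- The function g : (0,∞) → ℝ defined by g(x) = m(√x)/√x, where m is the Mills ratio of the standard normal law, is strictly completely monotonic on (0,∞), i.e., for every integer n ≥ 0 and every x > 0 one has (-1)ⁿ g⁽ⁿ⁾(x) > 0. -/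
open MeasureTheory Real Set Filter Metric

noncomputable def Fc (z : ℂ) : ℂ := ∫ s in Set.Ioi (0:ℝ), Complex.exp (-(z + s)^2 / 2)

lemma gauss_aux (R : ℝ) :
    Integrable (fun s : ℝ => (R + s) * Real.exp (R^2) * Real.exp (-(s-R)^2/2))
      (volume.restrict (Set.Ioi (0:ℝ))) := by
  apply Integrable.integrableOn
  have h1 : Integrable (fun u : ℝ => (2*R + u) * Real.exp (-(1/2) * u^2)) := by
    have h0 := (integrable_exp_neg_mul_sq (b := 1/2) (by norm_num)).const_mul (2*R)
    have h2 := integrable_mul_exp_neg_mul_sq (b := 1/2) (by norm_num)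
    refine (h0.add h2).congr (ae_of_all _ fun u => ?_)
    simp only [Pi.add_apply]; ring_nf
  have h3 := (h1.comp_sub_right R).const_mul (Real.exp (R^2))
  convert h3 using 2 with s
  ring_nf

lemma cexp_re_eq (z : ℂ) (s : ℝ) :
    (-(z + s)^2 / 2).re = (z.im^2 - (z.re + s)^2)/2 := by
  have h : ((z + s)^2).re = (z.re + s)^2 - z.im^2 := by
    simp [pow_two, Complex.mul_re]
  have : (-(z + s)^2 / 2).re = -((z + s)^2).re / 2 := by
    simp [Complex.neg_re, Complex.div_re]
  rw [this, h]
  ring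

lemma cexp_bound {z : ℂ} {R s : ℝ} (hz : ‖z‖ ≤ R) (hs : 0 ≤ s) :
    ‖Complex.exp (-(z + s)^2 / 2)‖ ≤ Real.exp (R^2) * Real.exp (-(s-R)^2/2) := by
  have hx : |z.re| ≤ R := (Complex.abs_re_le_norm z).trans hz
  have hy : |z.im| ≤ R := (Complex.abs_im_le_norm z).trans hz
  rw [Complex.norm_exp, ← Real.exp_add, cexp_re_eq]
  apply Real.exp_le_exp.mpr
  have h1 : -R ≤ z.re := neg_le_of_abs_le hx
  have h2 : z.im^2 ≤ R^2 := sq_le_sq' (neg_le_of_abs_le hy) (le_of_abs_le hy)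
  nlinarith [sq_nonneg z.re, sq_nonneg (z.re + s), mul_nonneg hs (by linarith : (0:ℝ) ≤ z.re + R)]

lemma diff_Fc (z₀ : ℂ) : DifferentiableAt ℂ Fc z₀ := by
  set R : ℝ := ‖z₀‖ + 1 with hR
  have hRpos : 0 < R := by positivity
  have key := hasDerivAt_integral_of_dominated_loc_of_deriv_le
    (μ := volume.restrict (Set.Ioi (0:ℝ)))
    (F := fun (z : ℂ) (s : ℝ) => Complex.exp (-(z + s)^2 / 2))
    (F' := fun (z : ℂ) (s : ℝ) => -(z + s) * Complex.exp (-(z + s)^2 / 2))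
    (x₀ := z₀) (s := Metric.ball z₀ 1)
    (bound := fun s : ℝ => (R + s) * Real.exp (R^2) * Real.exp (-(s-R)^2/2))
    (Metric.ball_mem_nhds z₀ one_pos) ?_ ?_ ?_ ?_ (gauss_aux R) ?_
  · exact ⟨_, key.2⟩
  · filter_upwards with z
    apply Continuous.aestronglyMeasurable
    fun_prop
  · -- integrability of F z₀
    apply Integrable.mono (gauss_aux R)
    · apply Continuous.aestronglyMeasurable; fun_prop
    · filter_upwards [ae_restrict_mem measurableSet_Ioi] with s hs
      have hb := cexp_bound (z := z₀) (R := R) (by simp [hR]) (le_of_lt (mem_Ioi.mp hs))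
      have h1 : (1:ℝ) ≤ R + s := by
        have := norm_nonneg z₀; simp only [hR]; linarith [le_of_lt (mem_Ioi.mp hs)]
      calc ‖Complex.exp (-(z₀ + s)^2 / 2)‖ ≤ Real.exp (R^2) * Real.exp (-(s-R)^2/2) := hb
        _ ≤ (R + s) * (Real.exp (R^2) * Real.exp (-(s-R)^2/2)) :=
            le_mul_of_one_le_left (by positivity) h1
        _ = (R + s) * Real.exp (R^2) * Real.exp (-(s-R)^2/2) := by ring
        _ ≤ ‖(R + s) * Real.exp (R^2) * Real.exp (-(s-R)^2/2)‖ := le_abs_self _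
  · apply Continuous.aestronglyMeasurable; fun_prop
  · -- bound for F'
    filter_upwards [ae_restrict_mem measurableSet_Ioi] with s hs z hz
    have hzR : ‖z‖ ≤ R := by
      have := norm_sub_norm_le z z₀
      have hd : ‖z - z₀‖ < 1 := by simpa [dist_eq_norm] using mem_ball.mp hz
      simp only [hR]; linarith
    have hb := cexp_bound (z := z) (R := R) hzR (le_of_lt hs)
    rw [norm_mul]
    have h2 : ‖-(z + (s:ℂ))‖ ≤ R + s := by
      rw [norm_neg]
      calc ‖z + (s:ℂ)‖ ≤ ‖z‖ + ‖(s:ℂ)‖ := norm_add_le _ _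
        _ ≤ R + s := by
            rw [Complex.norm_real]
            exact add_le_add hzR (le_of_eq (abs_of_pos hs))
    calc ‖-(z + (s:ℂ))‖ * ‖Complex.exp (-(z + s)^2 / 2)‖
        ≤ (R + s) * (Real.exp (R^2) * Real.exp (-(s-R)^2/2)) := by
          have hs' : (0:ℝ) < s := hs
          apply mul_le_mul h2 hb (norm_nonneg _) (by positivity)
      _ = (R + s) * Real.exp (R^2) * Real.exp (-(s-R)^2/2) := by ring
  · -- differentiability
    filter_upwards with s z _
    have h1 : HasDerivAt (fun z : ℂ => -(z + s)^2/2) (-(z+s)) z := by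
      have : HasDerivAt (fun z : ℂ => z + (s:ℂ)) 1 z := (hasDerivAt_id z).add_const _
      have hp := (this.pow 2).neg.div_const 2
      refine hp.congr_deriv ?_
      simp; ring
    have := h1.cexp
    refine this.congr_deriv ?_
    ring

lemma analytic_Fc_re : AnalyticOnNhd ℝ (fun x : ℝ => (Fc x).re) Set.univ := by
  have h0 : DifferentiableOn ℂ Fc Set.univ := fun z _ => (diff_Fc z).differentiableWithinAt
  have h1 : AnalyticOnNhd ℂ Fc Set.univ := h0.analyticOnNhd isOpen_univ
  have h2 : AnalyticOnNhd ℝ Fc Set.univ := h1.restrictScalars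
  have h3 : AnalyticOnNhd ℝ (fun x : ℝ => (x : ℂ)) Set.univ :=
    fun x _ => Complex.ofRealCLM.analyticAt x
  have h4 : AnalyticOnNhd ℝ (fun z : ℂ => z.re) Set.univ :=
    fun z _ => Complex.reCLM.analyticAt z
  exact fun x _ => ((h4 _ trivial).comp (h2 _ trivial)).comp (h3 x trivial)


noncomputable def Sv (x : ℝ) : ℝ := ∫ t in Set.Ioi x, stdNormalPDF t

lemma Sv_eq_Fc (x : ℝ) : Sv x = (Fc x).re / Real.sqrt (2 * Real.pi) := by
  have ha : Fc x = ((∫ s in Set.Ioi (0:ℝ), Real.exp (-(x+s)^2/2) : ℝ) : ℂ) := by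
    rw [Fc]
    rw [show (((∫ s in Set.Ioi (0:ℝ), Real.exp (-(x+s)^2/2) : ℝ)) : ℂ)
        = ∫ s in Set.Ioi (0:ℝ), ((Real.exp (-(x+s)^2/2) : ℝ) : ℂ) from (integral_ofReal).symm]
    apply setIntegral_congr_fun measurableSet_Ioi
    intro s _
    simp only
    rw [show (-((x:ℂ) + (s:ℂ))^2/2 : ℂ) = ((-(x+s)^2/2 : ℝ) : ℂ) by push_cast; ring,
      Complex.ofReal_exp]
  have hb : ∫ t in Set.Ioi x, Real.exp (-t^2/2) = ∫ s in Set.Ioi (0:ℝ), Real.exp (-(x+s)^2/2) := by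
    have himg : (fun s : ℝ => x + s) '' Set.Ioi (0:ℝ) = Set.Ioi x := by
      rw [Set.image_const_add_Ioi, add_zero]
    have := integral_image_eq_integral_abs_deriv_smul (s := Set.Ioi (0:ℝ)) (f := fun s : ℝ => x + s)
      (f' := fun _ => (1:ℝ)) measurableSet_Ioi
      (fun s _ => ((hasDerivAt_id s).const_add x).hasDerivWithinAt)
      (add_right_injective x).injOn (fun t => Real.exp (-t^2/2))
    rw [himg] at this
    rw [this]
    simp
  rw [ha]
  simp only [Complex.ofReal_re]
  rw [← hb, Sv, ← integral_div]
  rfl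

lemma contDiffAt_Sv (x : ℝ) : ContDiffAt ℝ (⊤ : ℕ∞) Sv x := by
  have h : Sv = fun x : ℝ => (Fc ↑x).re / Real.sqrt (2 * Real.pi) := funext Sv_eq_Fc
  rw [h]
  exact ((analytic_Fc_re x trivial).contDiffAt).div_const _



lemma stdNormalPDF_pos (t : ℝ) : 0 < stdNormalPDF t := by
  have := Real.pi_pos
  unfold stdNormalPDF
  positivity

lemma contDiff_stdNormalPDF : ContDiff ℝ (⊤ : ℕ∞) stdNormalPDF := by
  unfold stdNormalPDF
  exact (Real.contDiff_exp.comp ((contDiff_id.pow 2).neg.div_const 2)).div_const _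

lemma contDiffOn_g :
    ContDiffOn ℝ (⊤ : ℕ∞) (fun y : ℝ => millsRatio (Real.sqrt y) / Real.sqrt y) (Set.Ioi 0) := by
  intro y hy
  have hy0 : (0:ℝ) < y := hy
  apply ContDiffAt.contDiffWithinAt
  have hsq : ContDiffAt ℝ (⊤ : ℕ∞) Real.sqrt y := contDiffAt_sqrt (ne_of_gt hy0)
  have hS : ContDiffAt ℝ (⊤ : ℕ∞) (fun y => Sv (Real.sqrt y)) y := (contDiffAt_Sv _).comp y hsq
  have hphi : ContDiffAt ℝ (⊤ : ℕ∞) (fun y => stdNormalPDF (Real.sqrt y)) y :=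
    contDiff_stdNormalPDF.contDiffAt.comp y hsq
  have h1 : ContDiffAt ℝ (⊤ : ℕ∞) (fun y => millsRatio (Real.sqrt y)) y := by
    have := hS.div hphi (ne_of_gt (stdNormalPDF_pos _))
    exact this.congr_of_eventuallyEq (by filter_upwards with z; rfl)
  exact h1.div hsq (Real.sqrt_ne_zero'.mpr hy0)

noncomputable def tmE (p : ℝ × ℝ × ℝ) (x v : ℝ) : ℝ := p.1 * x ^ (-p.2.1) * (x + v) ^ (-p.2.2)

noncomputable def evalL (L : List (ℝ × ℝ × ℝ)) (x v : ℝ) : ℝ := (L.map (fun p => tmE p x v)).sum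

def stepL (L : List (ℝ × ℝ × ℝ)) : List (ℝ × ℝ × ℝ) :=
  L.flatMap fun p => [(p.1 * p.2.1, p.2.1 + 1, p.2.2), (p.1 * p.2.2, p.2.1, p.2.2 + 1)]

def goodL (L : List (ℝ × ℝ × ℝ)) : Prop :=
  L ≠ [] ∧ ∀ p ∈ L, 0 < p.1 ∧ 0 < p.2.1 ∧ 0 < p.2.2

lemma evalL_nil (x v : ℝ) : evalL [] x v = 0 := rfl
lemma evalL_cons (p : ℝ × ℝ × ℝ) (L : List (ℝ × ℝ × ℝ)) (x v : ℝ) :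
    evalL (p :: L) x v = tmE p x v + evalL L x v := by simp [evalL]

lemma stepL_cons (p : ℝ × ℝ × ℝ) (L : List (ℝ × ℝ × ℝ)) :
    stepL (p :: L) = (p.1 * p.2.1, p.2.1 + 1, p.2.2) :: (p.1 * p.2.2, p.2.1, p.2.2 + 1) :: stepL L := by
  simp [stepL]

lemma goodL_stepL {L : List (ℝ × ℝ × ℝ)} (h : goodL L) : goodL (stepL L) := by
  obtain ⟨hne, hp⟩ := h
  constructor
  · cases L with
    | nil => exact absurd rfl hne
    | cons p L => rw [stepL_cons]; simp
  · intro q hq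
    simp only [stepL, List.mem_flatMap, List.mem_cons] at hq
    obtain ⟨p, hpL, hq⟩ := hq
    obtain ⟨h1, h2, h3⟩ := hp p hpL
    rcases hq with h | h | h
    · subst h; dsimp only; exact ⟨mul_pos h1 h2, by linarith, h3⟩
    · subst h; dsimp only; exact ⟨mul_pos h1 h3, h2, by linarith⟩
    · simp at h

lemma tmE_pos {p : ℝ × ℝ × ℝ} (hp : 0 < p.1) {x v : ℝ} (hx : 0 < x) (hv : 0 ≤ v) :
    0 < tmE p x v := by
  have hxv : 0 < x + v := by linarith
  unfold tmE
  positivity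

lemma evalL_nonneg {L : List (ℝ × ℝ × ℝ)} (h : ∀ p ∈ L, 0 < p.1) {x v : ℝ}
    (hx : 0 < x) (hv : 0 ≤ v) : 0 ≤ evalL L x v := by
  induction L with
  | nil => simp [evalL_nil]
  | cons p L ih =>
    rw [evalL_cons]
    have := tmE_pos (h p (by simp)) hx hv
    have := ih (fun q hq => h q (by simp [hq]))
    linarith

lemma evalL_pos {L : List (ℝ × ℝ × ℝ)} (h : goodL L) {x v : ℝ}
    (hx : 0 < x) (hv : 0 ≤ v) : 0 < evalL L x v := by
  obtain ⟨hne, hp⟩ := h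
  cases L with
  | nil => exact absurd rfl hne
  | cons p L =>
    rw [evalL_cons]
    have h1 := tmE_pos (hp p (List.mem_cons_self)).1 hx hv
    have h2 := evalL_nonneg (fun q hq => (hp q (List.mem_cons_of_mem p hq)).1) hx hv
    linarith

lemma rpow_neg_mono {m x a : ℝ} (hm : 0 < m) (hx : m ≤ x) (ha : 0 ≤ a) :
    x ^ (-a) ≤ m ^ (-a) := by
  have hx0 : 0 < x := lt_of_lt_of_le hm hx
  rw [Real.rpow_neg hx0.le, Real.rpow_neg hm.le]
  exact inv_anti₀ (Real.rpow_pos_of_pos hm a) (Real.rpow_le_rpow hm.le hx ha)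

lemma tmE_le {p : ℝ × ℝ × ℝ} (hp : 0 < p.1 ∧ 0 < p.2.1 ∧ 0 < p.2.2) {m x v : ℝ}
    (hm : 0 < m) (hx : m ≤ x) (hv : 0 ≤ v) : tmE p x v ≤ tmE p m 0 := by
  obtain ⟨h1, h2, h3⟩ := hp
  unfold tmE
  rw [add_zero]
  have e1 : x ^ (-p.2.1) ≤ m ^ (-p.2.1) := rpow_neg_mono hm hx h2.le
  have e2 : (x + v) ^ (-p.2.2) ≤ m ^ (-p.2.2) := rpow_neg_mono hm (by linarith) h3.le
  have q1 : (0:ℝ) < x ^ (-p.2.1) := Real.rpow_pos_of_pos (by linarith) _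
  have q2 : (0:ℝ) < (x + v) ^ (-p.2.2) := Real.rpow_pos_of_pos (by linarith) _
  have q3 : (0:ℝ) < m ^ (-p.2.1) := Real.rpow_pos_of_pos hm _
  calc p.1 * x ^ (-p.2.1) * (x + v) ^ (-p.2.2)
      = p.1 * (x ^ (-p.2.1) * (x + v) ^ (-p.2.2)) := by ring
    _ ≤ p.1 * (m ^ (-p.2.1) * m ^ (-p.2.2)) := by
        apply mul_le_mul_of_nonneg_left _ h1.le
        exact mul_le_mul e1 e2 q2.le q3.le
    _ = p.1 * m ^ (-p.2.1) * m ^ (-p.2.2) := by ring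

lemma evalL_le {L : List (ℝ × ℝ × ℝ)} (h : ∀ p ∈ L, 0 < p.1 ∧ 0 < p.2.1 ∧ 0 < p.2.2)
    {m x v : ℝ} (hm : 0 < m) (hx : m ≤ x) (hv : 0 ≤ v) : evalL L x v ≤ evalL L m 0 := by
  induction L with
  | nil => simp [evalL_nil]
  | cons p L ih =>
    rw [evalL_cons, evalL_cons]
    have := tmE_le (h p (by simp)) hm hx hv
    have := ih (fun q hq => h q (by simp [hq]))
    linarith

lemma hasDerivAt_tmE (p : ℝ × ℝ × ℝ) {x v : ℝ} (hx : 0 < x) (hv : 0 ≤ v) :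
    HasDerivAt (fun x => tmE p x v)
      (-(tmE (p.1 * p.2.1, p.2.1 + 1, p.2.2) x v + tmE (p.1 * p.2.2, p.2.1, p.2.2 + 1) x v)) x := by
  obtain ⟨c, a, b⟩ := p
  have hxv : 0 < x + v := by linarith
  have h1 : HasDerivAt (fun x : ℝ => x ^ (-a)) (-a * x ^ (-a - 1)) x := by
    simpa using Real.hasDerivAt_rpow_const (p := -a) (Or.inl hx.ne')
  have h2 : HasDerivAt (fun x : ℝ => (x + v) ^ (-b)) (-b * (x + v) ^ (-b - 1)) x := by
    have hb : HasDerivAt (fun x : ℝ => x + v) 1 x := (hasDerivAt_id x).add_const v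
    have := hb.rpow_const (p := -b) (Or.inl hxv.ne')
    simpa using this
  have := (h1.const_mul c).mul h2
  refine this.congr_deriv ?_
  simp only [tmE]
  rw [show -(a + 1) = -a - 1 by ring, show -(b + 1) = -b - 1 by ring]
  ring

lemma hasDerivAt_evalL (L : List (ℝ × ℝ × ℝ)) {x v : ℝ} (hx : 0 < x) (hv : 0 ≤ v) :
    HasDerivAt (fun x => evalL L x v) (-(evalL (stepL L) x v)) x := by
  induction L with
  | nil =>
    simp only [evalL_nil, stepL, List.flatMap_nil, neg_zero]
    exact (hasDerivAt_const x 0).congr_deriv (by simp [evalL_nil])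
  | cons p L ih =>
    have h := (hasDerivAt_tmE p hx hv).add ih
    have heq : (fun x => evalL (p :: L) x v) = fun x => tmE p x v + evalL L x v := by
      funext x; rw [evalL_cons]
    rw [heq]
    refine h.congr_deriv ?_
    rw [stepL_cons, evalL_cons, evalL_cons]
    ring

lemma continuousOn_evalL (L : List (ℝ × ℝ × ℝ)) {x : ℝ} (hx : 0 < x) :
    ContinuousOn (fun v => evalL L x v) (Set.Ici 0) := by
  induction L with
  | nil => simp [evalL_nil]; exact continuousOn_const
  | cons p L ih =>
    have h1 : ContinuousOn (fun v => tmE p x v) (Set.Ici 0) := by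
      unfold tmE
      apply ContinuousOn.mul continuousOn_const
      apply ContinuousOn.rpow_const
      · exact (continuous_const.add continuous_id).continuousOn
      · intro v hv
        have : (0:ℝ) ≤ v := hv
        exact Or.inl (by positivity)
    have := h1.add ih
    apply this.congr
    intro v _
    simp only
    rw [evalL_cons]
    rfl

lemma aesm_evalL (L : List (ℝ × ℝ × ℝ)) {x : ℝ} (hx : 0 < x) :
    AEStronglyMeasurable (fun v => Real.exp (-v/2) * evalL L x v)
      (volume.restrict (Set.Ioi (0:ℝ))) := by
  apply ContinuousOn.aestronglyMeasurable _ measurableSet_Ioi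
  apply ContinuousOn.mul
  · exact (Real.continuous_exp.comp (continuous_id.neg.div_const 2)).continuousOn
  · exact (continuousOn_evalL L hx).mono (fun v hv => mem_Ici.mpr (le_of_lt (mem_Ioi.mp hv)))

lemma bound_integrable (C : ℝ) :
    Integrable (fun v : ℝ => C * Real.exp (-(1/2) * v)) (volume.restrict (Set.Ioi (0:ℝ))) :=
  (exp_neg_integrableOn_Ioi 0 (by norm_num : (0:ℝ) < 1/2)).const_mul C

lemma integrable_evalL {L : List (ℝ × ℝ × ℝ)} (h : ∀ p ∈ L, 0 < p.1 ∧ 0 < p.2.1 ∧ 0 < p.2.2)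
    {x : ℝ} (hx : 0 < x) :
    Integrable (fun v => Real.exp (-v/2) * evalL L x v) (volume.restrict (Set.Ioi (0:ℝ))) := by
  apply Integrable.mono (bound_integrable (evalL L x 0)) (aesm_evalL L hx)
  filter_upwards [ae_restrict_mem measurableSet_Ioi] with v hv
  have hv0 : (0:ℝ) < v := hv
  have hnn : 0 ≤ evalL L x v := evalL_nonneg (fun p hp => (h p hp).1) hx hv0.le
  have hle : evalL L x v ≤ evalL L x 0 := evalL_le h hx le_rfl hv0.le
  rw [Real.norm_eq_abs, Real.norm_eq_abs, abs_of_nonneg (by positivity :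
    (0:ℝ) ≤ Real.exp (-v/2) * evalL L x v)]
  have h2 : Real.exp (-v/2) * evalL L x v ≤ Real.exp (-v/2) * evalL L x 0 :=
    mul_le_mul_of_nonneg_left hle (Real.exp_pos _).le
  have h3 : Real.exp (-v/2) = Real.exp (-(1/2) * v) := by ring_nf
  calc Real.exp (-v/2) * evalL L x v ≤ Real.exp (-v/2) * evalL L x 0 := h2
    _ = evalL L x 0 * Real.exp (-(1/2) * v) := by rw [h3]; ring
    _ ≤ |evalL L x 0 * Real.exp (-(1/2) * v)| := le_abs_self _

lemma hasDerivAt_integral_evalL {L : List (ℝ × ℝ × ℝ)} (hL : goodL L) {x₀ : ℝ} (hx₀ : 0 < x₀) :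
    HasDerivAt (fun x => ∫ v in Set.Ioi (0:ℝ), Real.exp (-v/2) * evalL L x v)
      (-∫ v in Set.Ioi (0:ℝ), Real.exp (-v/2) * evalL (stepL L) x₀ v) x₀ := by
  have hstep := goodL_stepL hL
  have key := hasDerivAt_integral_of_dominated_loc_of_deriv_le
    (μ := volume.restrict (Set.Ioi (0:ℝ)))
    (F := fun (x : ℝ) (v : ℝ) => Real.exp (-v/2) * evalL L x v)
    (F' := fun (x : ℝ) (v : ℝ) => Real.exp (-v/2) * (-(evalL (stepL L) x v)))
    (x₀ := x₀) (s := Metric.ball x₀ (x₀/2))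
    (bound := fun v : ℝ => evalL (stepL L) (x₀/2) 0 * Real.exp (-(1/2) * v))
    (Metric.ball_mem_nhds x₀ (by positivity)) ?_ (integrable_evalL hL.2 hx₀) ?_ ?_ (bound_integrable _) ?_
  · have h2 := key.2
    have : (∫ v in Set.Ioi (0:ℝ), Real.exp (-v/2) * (-(evalL (stepL L) x₀ v)))
        = -∫ v in Set.Ioi (0:ℝ), Real.exp (-v/2) * evalL (stepL L) x₀ v := by
      rw [← integral_neg]
      congr 1; funext v; ring
    rwa [this] at h2
  · filter_upwards [eventually_gt_nhds hx₀] with x hx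
    exact aesm_evalL L hx
  · have := aesm_evalL (stepL L) hx₀
    apply AEStronglyMeasurable.congr (this.neg)
    filter_upwards with v
    simp only [Pi.neg_apply]
    ring
  · filter_upwards [ae_restrict_mem measurableSet_Ioi] with v hv x hx
    have hv0 : (0:ℝ) < v := hv
    have hxl : x₀/2 ≤ x := by
      have := abs_lt.mp (by simpa [dist_eq_norm, Real.norm_eq_abs] using mem_ball.mp hx)
      linarith [this.1]
    have hx0 : 0 < x := by linarith
    have hnn : 0 ≤ evalL (stepL L) x v := evalL_nonneg (fun p hp => (hstep.2 p hp).1) hx0 hv0.le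
    have hle : evalL (stepL L) x v ≤ evalL (stepL L) (x₀/2) 0 :=
      evalL_le hstep.2 (by positivity) hxl hv0.le
    rw [Real.norm_eq_abs]
    have habs : |Real.exp (-v/2) * (-(evalL (stepL L) x v))| = Real.exp (-v/2) * evalL (stepL L) x v := by
      rw [abs_of_nonpos (mul_nonpos_of_nonneg_of_nonpos (Real.exp_pos _).le (neg_nonpos.mpr hnn))]
      ring
    rw [habs]
    calc Real.exp (-v/2) * evalL (stepL L) x v
        ≤ Real.exp (-v/2) * evalL (stepL L) (x₀/2) 0 :=
          mul_le_mul_of_nonneg_left hle (Real.exp_pos _).le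
      _ = evalL (stepL L) (x₀/2) 0 * Real.exp (-(1/2) * v) := by
          rw [show (-v/2 : ℝ) = -(1/2)*v by ring]; ring
  · filter_upwards [ae_restrict_mem measurableSet_Ioi] with v hv x hx
    have hv0 : (0:ℝ) < v := hv
    have hxl : x₀/2 ≤ x := by
      have := abs_lt.mp (by simpa [dist_eq_norm, Real.norm_eq_abs] using mem_ball.mp hx)
      linarith [this.1]
    have hx0 : 0 < x := by linarith
    exact (hasDerivAt_evalL L hx0 hv0.le).const_mul (Real.exp (-v/2))

lemma integral_evalL_pos {L : List (ℝ × ℝ × ℝ)} (hL : goodL L) {x : ℝ} (hx : 0 < x) :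
    0 < ∫ v in Set.Ioi (0:ℝ), Real.exp (-v/2) * evalL L x v := by
  rw [setIntegral_pos_iff_support_of_nonneg_ae]
  · have hsub : Set.Ioi (0:ℝ) ⊆ Function.support (fun v => Real.exp (-v/2) * evalL L x v) ∩ Set.Ioi 0 := by
      intro v hv
      have hv0 : (0:ℝ) < v := hv
      refine ⟨?_, hv⟩
      have := evalL_pos hL hx hv0.le
      have := Real.exp_pos (-v/2)
      simp only [Function.mem_support]
      positivity
    refine lt_of_lt_of_le ?_ (measure_mono hsub)
    rw [Real.volume_Ioi]
    exact ENNReal.zero_lt_top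
  · filter_upwards [ae_restrict_mem measurableSet_Ioi] with v hv
    have hv0 : (0:ℝ) < v := hv
    have := evalL_pos hL hx hv0.le
    positivity
  · exact integrable_evalL hL.2 hx






noncomputable def L0 : List (ℝ × ℝ × ℝ) := [(1/2, 1/2, 1/2)]

lemma goodL_L0 : goodL L0 := by
  constructor
  · simp [L0]
  · intro p hp
    simp [L0] at hp
    subst hp
    norm_num

lemma goodL_iter (n : ℕ) : goodL (stepL^[n] L0) := by
  induction n with
  | zero => exact goodL_L0
  | succ n ih => rw [Function.iterate_succ_apply']; exact goodL_stepL ih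

noncomputable def Gn (n : ℕ) (x : ℝ) : ℝ :=
  ∫ v in Set.Ioi (0:ℝ), Real.exp (-v/2) * evalL (stepL^[n] L0) x v

lemma base_repr {x : ℝ} (hx : 0 < x) :
    millsRatio (Real.sqrt x) / Real.sqrt x = Gn 0 x := by
  have hsx : 0 < Real.sqrt x := Real.sqrt_pos.mpr hx
  -- substitution
  have himg : (fun v : ℝ => Real.sqrt (x + v)) '' Set.Ioi 0 = Set.Ioi (Real.sqrt x) := by
    ext t
    constructor
    · rintro ⟨v, hv, rfl⟩
      have hv0 : (0:ℝ) < v := hv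
      exact Real.sqrt_lt_sqrt hx.le (by linarith)
    · intro ht
      have ht0 : Real.sqrt x < t := ht
      have ht1 : 0 < t := lt_trans hsx ht0
      refine ⟨t^2 - x, ?_, ?_⟩
      · have hlt : x < t^2 := (Real.sqrt_lt' ht1).mp ht0
        simpa using hlt
      · show Real.sqrt (x + (t^2 - x)) = t
        rw [show x + (t^2 - x) = t^2 by ring, Real.sqrt_sq ht1.le]
  have hder : ∀ v ∈ Set.Ioi (0:ℝ), HasDerivWithinAt (fun v : ℝ => Real.sqrt (x + v))
      (1 / (2 * Real.sqrt (x + v))) (Set.Ioi 0) v := by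
    intro v hv
    have hv0 : (0:ℝ) < v := hv
    have h1 : HasDerivAt (fun v : ℝ => x + v) 1 v := (hasDerivAt_id v).const_add x
    have := h1.sqrt (by positivity)
    simpa using this.hasDerivWithinAt
  have hinj : Set.InjOn (fun v : ℝ => Real.sqrt (x + v)) (Set.Ioi 0) := by
    intro a ha b hb h
    have ha0 : (0:ℝ) < a := ha
    have hb0 : (0:ℝ) < b := hb
    have := (Real.sqrt_inj (by linarith) (by linarith)).mp h
    linarith
  have hsub := integral_image_eq_integral_abs_deriv_smul (s := Set.Ioi (0:ℝ))
    measurableSet_Ioi hder hinj stdNormalPDF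
  rw [himg] at hsub
  -- pointwise form
  have hpt : ∀ v ∈ Set.Ioi (0:ℝ),
      |1 / (2 * Real.sqrt (x + v))| • stdNormalPDF (Real.sqrt (x + v))
      = (Real.exp (-v/2) * evalL L0 x v) * (stdNormalPDF (Real.sqrt x) * Real.sqrt x) := by
    intro v hv
    have hv0 : (0:ℝ) < v := hv
    have hxv : 0 < x + v := by linarith
    have hsxv : 0 < Real.sqrt (x + v) := Real.sqrt_pos.mpr hxv
    have e1 : stdNormalPDF (Real.sqrt (x + v)) = Real.exp (-(x+v)/2) / Real.sqrt (2 * Real.pi) := by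
      unfold stdNormalPDF
      rw [Real.sq_sqrt hxv.le]
    have e2 : stdNormalPDF (Real.sqrt x) = Real.exp (-x/2) / Real.sqrt (2 * Real.pi) := by
      unfold stdNormalPDF
      rw [Real.sq_sqrt hx.le]
    have e3 : evalL L0 x v = (1/2) * (Real.sqrt x)⁻¹ * (Real.sqrt (x+v))⁻¹ := by
      show tmE (1/2, 1/2, 1/2) x v + 0 = _
      rw [add_zero]
      unfold tmE
      rw [Real.rpow_neg hx.le, Real.rpow_neg hxv.le, ← Real.sqrt_eq_rpow, ← Real.sqrt_eq_rpow]
    have e4 : Real.exp (-v/2) * Real.exp (-x/2) = Real.exp (-(x+v)/2) := by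
      rw [← Real.exp_add]; congr 1; ring
    rw [smul_eq_mul, e1, e2, e3, abs_of_pos (by positivity : (0:ℝ) < 1 / (2 * Real.sqrt (x + v)))]
    have hpi : 0 < Real.sqrt (2 * Real.pi) := Real.sqrt_pos.mpr (by positivity)
    field_simp
    rw [← Real.exp_add]
    ring_nf
  have hsub2 : (∫ t in Set.Ioi (Real.sqrt x), stdNormalPDF t)
      = (∫ v in Set.Ioi (0:ℝ), Real.exp (-v/2) * evalL L0 x v) * (stdNormalPDF (Real.sqrt x) * Real.sqrt x) := by
    rw [hsub, setIntegral_congr_fun measurableSet_Ioi hpt, integral_mul_const]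
  unfold millsRatio
  rw [hsub2, Gn]
  simp only [Function.iterate_zero_apply]
  rw [div_div, mul_div_assoc, div_self (ne_of_gt (mul_pos (stdNormalPDF_pos _) hsx)), mul_one]

lemma hasDerivAt_Gn (n : ℕ) {x : ℝ} (hx : 0 < x) :
    HasDerivAt (Gn n) (-(Gn (n+1) x)) x := by
  have h := hasDerivAt_integral_evalL (goodL_iter n) hx
  have : Gn (n+1) x = ∫ v in Set.Ioi (0:ℝ), Real.exp (-v/2) * evalL (stepL (stepL^[n] L0)) x v := by
    rw [Gn, Function.iterate_succ_apply']
  rw [this]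
  exact h

lemma bridge (n : ℕ) : ∀ x : ℝ, 0 < x →
    iteratedDeriv n (fun y : ℝ => millsRatio (Real.sqrt y) / Real.sqrt y) x = (-1)^n * Gn n x := by
  induction n with
  | zero =>
    intro x hx
    simpa [iteratedDeriv_zero] using base_repr hx
  | succ n ih =>
    intro x hx
    rw [iteratedDeriv_succ]
    have hev : iteratedDeriv n (fun y : ℝ => millsRatio (Real.sqrt y) / Real.sqrt y)
        =ᶠ[nhds x] fun y => (-1:ℝ)^n * Gn n y := by
      filter_upwards [Ioi_mem_nhds hx] with y hy
      exact ih y hy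
    rw [hev.deriv_eq]
    have hd : HasDerivAt (fun y => (-1:ℝ)^n * Gn n y) ((-1:ℝ)^n * (-(Gn (n+1) x))) x :=
      (hasDerivAt_Gn n hx).const_mul _
    rw [hd.deriv]
    rw [pow_succ]
    ring

/-- The function `g(x) = m(√x)/√x`, where `m` is the Mills ratio of the standard normal law,
is strictly completely monotonic on `(0,∞)`: it has derivatives of all orders there and
`(-1)ⁿ g⁽ⁿ⁾(x) > 0` for every `n ≥ 0` and every `x > 0`. -/
theorem millsRatio_sqrt_div_sqrt_strictly_completely_monotonic :
    ContDiffOn ℝ (⊤ : ℕ∞) (fun y : ℝ => millsRatio (Real.sqrt y) / Real.sqrt y) (Set.Ioi 0) ∧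
      ∀ (n : ℕ) (x : ℝ), 0 < x →
        0 < (-1 : ℝ) ^ n *
          iteratedDeriv n (fun y : ℝ => millsRatio (Real.sqrt y) / Real.sqrt y) x := by
  constructor
  · exact contDiffOn_g
  · intro n x hx
    rw [bridge n x hx, ← mul_assoc, ← mul_pow]
    norm_num
    exact integral_evalL_pos (goodL_iter n) hx
end

section
/- Let f : (0,∞) → (0,∞) be a twice differentiable probability density function (∫₀^∞ f(t) dt = 1), with logarithmic derivative ω(x) = f′(x)/f(x), survival function F̄(x) = ∫ₓ^∞ f(t) dt, and Mills ratio m(x) = F̄(x)/f(x). If f(x)/ω(x) → 0 as x → ∞, the function x ↦ ω′(x)/ω(x)² is decreasing on (0,∞), and the function x ↦ x³ω′(x)/(xω(x)² − xω′(x) − 2ω(x)) is increasing on (0,∞), then m is reciprocally convex on (0,∞), i.e., m is concave on (0,∞) and x ↦ m(1/x) is convex on (0,∞). -/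
/-!
With `g = ω′/ω²`, the Mills ratio satisfies `m′ = -1 - ωm` and `m″ = m(ω² - ω′) + ω`, so
concavity of `m` and convexity of `x ↦ m(1/x)` (whose second derivative is `(y m″(y) + 2m′(y))/x³`
at `y = 1/x`) amount to `(1 - g)F̄ ≤ -f/ω` and `f(2 - yω) ≤ F̄ (yω² - yω′ - 2ω)`. In each case,
freezing the monotone quantity (`g`, resp. `q = y³ω′/(yω² - yω′ - 2ω)`) at the left endpoint `y`
gives a function of `t ∈ [y, ∞)` with nonpositive derivative tending to `0` at `∞`, so it is
nonnegative at `y`.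

Both steps need `ω < 0`. If `ω ≥ 0` on a half-line, `f` is nondecreasing there and cannot be
integrable; a first zero of `ω` after a positive value would force `ω′ ≥ 0` before it by the
monotonicity of `g`, and a zero of `ω ≤ 0` forces `ω′ = 0`, hence `ω = 0`, beyond it by the
monotonicity of `g` and `q`. Finally `yω² - yω′ - 2ω > 0` because `-1/ω` is positive with antitone derivative `g`,
hence `y g(y) ≤ -1/ω(y)`.
-/

open MeasureTheory Set Filter Topology

theorem not_integrableOn_Ioi_of_monotoneOn {f : ℝ → ℝ} {a : ℝ} (hf : MonotoneOn f (Ici a))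
    (ha : 0 < f a) : ¬IntegrableOn f (Ioi a) := by
  intro hint
  have hconst : IntegrableOn (fun _ => f a) (Ioi a) := by
    refine Integrable.mono' hint aestronglyMeasurable_const ?_
    filter_upwards [ae_restrict_mem measurableSet_Ioi] with t ht
    rw [Real.norm_of_nonneg ha.le]
    exact hf self_mem_Ici (mem_Ici.2 (le_of_lt ht)) (le_of_lt ht)
  simp [integrableOn_const_iff, ha.ne'] at hconst

theorem hasDerivAt_integral_Ioi {f : ℝ → ℝ} {a x : ℝ} (hf : IntegrableOn f (Ioi a))
    (hfx : ContinuousAt f x) (hax : a < x) :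
    HasDerivAt (fun y => ∫ t in Ioi y, f t) (-f x) x := by
  have hmeas : StronglyMeasurableAtFilter f (𝓝 x) :=
    ⟨Ioi a, Ioi_mem_nhds hax, hf.aestronglyMeasurable⟩
  have hint : IntervalIntegrable f volume a x :=
    (intervalIntegrable_iff_integrableOn_Ioc_of_le hax.le).2 (hf.mono_set Ioc_subset_Ioi_self)
  refine ((intervalIntegral.integral_hasDerivAt_right hint hmeas hfx).const_sub
    (∫ t in Ioi a, f t)).congr_of_eventuallyEq ?_
  filter_upwards [Ioi_mem_nhds hax] with y hy
  rw [← intervalIntegral.integral_Ioi_sub_Ioi hf hy.le, sub_sub_cancel]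

theorem exists_first_zero {φ : ℝ → ℝ} {a b : ℝ} (hab : a ≤ b) (hφ : ContinuousOn φ (Icc a b))
    (ha : 0 < φ a) (hb : φ b ≤ 0) : ∃ c ∈ Ioc a b, φ c = 0 ∧ ∀ s ∈ Ico a c, 0 < φ s := by
  set K := Icc a b ∩ φ ⁻¹' Iic 0
  have hK : IsClosed K := hφ.preimage_isClosed_of_isClosed isClosed_Icc isClosed_Iic
  have hbdd : BddBelow K := ⟨a, fun t ht => ht.1.1⟩
  have hcK : sInf K ∈ K := hK.csInf_mem ⟨b, ⟨right_mem_Icc.2 hab, hb⟩⟩ hbdd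
  have hbefore : ∀ s ∈ Ico a (sInf K), 0 < φ s := fun s hs => by
    by_contra! hs'
    exact (csInf_le hbdd ⟨⟨hs.1, hs.2.le.trans hcK.1.2⟩, hs'⟩).not_gt hs.2
  have hac : a < sInf K := hcK.1.1.lt_of_ne fun h => (h ▸ hcK.2 : φ a ≤ 0).not_gt ha
  obtain ⟨z, hz, hz0⟩ := intermediate_value_Icc' hcK.1.1 (hφ.mono (Icc_subset_Icc_right hcK.1.2))
    ⟨hcK.2, ha.le⟩
  have hzc : z = sInf K := hz.2.antisymm (csInf_le hbdd ⟨⟨hz.1, hz.2.trans hcK.1.2⟩, hz0.le⟩)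
  exact ⟨sInf K, ⟨hac, hcK.1.2⟩, hzc ▸ hz0, hbefore⟩

theorem nonneg_of_hasDerivAt_nonpos_of_tendsto {G G' : ℝ → ℝ} {y : ℝ}
    (hG : ∀ t ≥ y, HasDerivAt G (G' t) t) (hG' : ∀ t ≥ y, G' t ≤ 0)
    (hlim : Tendsto G atTop (𝓝 0)) : 0 ≤ G y := by
  have hanti : AntitoneOn G (Ici y) :=
    antitoneOn_of_hasDerivWithinAt_nonpos (convex_Ici y)
      (fun t ht => (hG t ht).continuousAt.continuousWithinAt)
      (fun t ht => (hG t (interior_subset ht)).hasDerivWithinAt)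
      (fun t ht => hG' t (interior_subset ht))
  refine le_of_tendsto hlim ?_
  filter_upwards [eventually_ge_atTop y] with t ht
  exact hanti self_mem_Ici ht ht

theorem mul_le_of_hasDerivAt_of_antitoneOn {φ φ' : ℝ → ℝ} (hφ : ∀ x > 0, HasDerivAt φ (φ' x) x)
    (hφ₀ : ∀ x > 0, 0 ≤ φ x) (hφ' : AntitoneOn φ' (Ioi 0)) {t : ℝ} (ht : 0 < t) :
    t * φ' t ≤ φ t := by
  have hchord : ∀ ε ∈ Ioo 0 t, φ' t * (t - ε) ≤ φ t := by
    intro ε hε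
    have hpos : ∀ s ∈ Icc ε t, 0 < s := fun s hs => hε.1.trans_le hs.1
    have := (convex_Icc ε t).mul_sub_le_image_sub_of_le_deriv
      (fun s hs => (hφ s (hpos s hs)).continuousAt.continuousWithinAt)
      (fun s hs => (hφ s (hpos s (interior_subset hs))).differentiableAt.differentiableWithinAt)
      (fun s hs => by
        rw [interior_Icc] at hs
        rw [(hφ s (hε.1.trans hs.1)).deriv]
        exact hφ' (hε.1.trans hs.1) ht hs.2.le)
      ε (left_mem_Icc.2 hε.2.le) t (right_mem_Icc.2 hε.2.le) hε.2.le
    linarith [hφ₀ ε hε.1]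
  have hlim : Tendsto (fun ε => φ' t * (t - ε)) (𝓝[>] 0) (𝓝 (t * φ' t)) :=
    ((continuous_const.mul (continuous_const.sub continuous_id)).tendsto' 0 _
      (by simp [mul_comm])).mono_left nhdsWithin_le_nhds
  exact le_of_tendsto hlim (Filter.mem_of_superset (Ioo_mem_nhdsGT ht) hchord)

theorem convexOn_Ioi_of_hasDerivAt2_nonneg {f f' f'' : ℝ → ℝ} {a : ℝ}
    (hf : ∀ x > a, HasDerivAt f (f' x) x) (hf' : ∀ x > a, HasDerivAt f' (f'' x) x)
    (hf'' : ∀ x > a, 0 ≤ f'' x) : ConvexOn ℝ (Ioi a) f := by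
  refine convexOn_of_hasDerivWithinAt2_nonneg (f' := f') (f'' := f'') (convex_Ioi a)
    (fun x hx => (hf x hx).continuousAt.continuousWithinAt) ?_ ?_ ?_ <;>
    simp only [interior_Ioi, mem_Ioi]
  · exact fun x hx => (hf x hx).hasDerivWithinAt
  · exact fun x hx => (hf' x hx).hasDerivWithinAt
  · exact hf''

theorem concaveOn_Ioi_of_hasDerivAt2_nonpos {f f' f'' : ℝ → ℝ} {a : ℝ}
    (hf : ∀ x > a, HasDerivAt f (f' x) x) (hf' : ∀ x > a, HasDerivAt f' (f'' x) x)
    (hf'' : ∀ x > a, f'' x ≤ 0) : ConcaveOn ℝ (Ioi a) f :=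
  neg_convexOn_iff.1 <| convexOn_Ioi_of_hasDerivAt2_nonneg (fun x hx => (hf x hx).neg)
    (fun x hx => (hf' x hx).neg) (fun x hx => neg_nonneg.2 (hf'' x hx))

theorem convexOn_comp_inv_of_hasDerivAt2 {m m' m'' : ℝ → ℝ}
    (hm : ∀ x > 0, HasDerivAt m (m' x) x) (hm' : ∀ x > 0, HasDerivAt m' (m'' x) x)
    (h : ∀ x > 0, 0 ≤ x * m'' x + 2 * m' x) : ConvexOn ℝ (Ioi 0) (fun x => m x⁻¹) := by
  refine convexOn_Ioi_of_hasDerivAt2_nonneg (f' := fun x => m' x⁻¹ * -(x ^ 2)⁻¹)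
    (f'' := fun x => (x⁻¹ * m'' x⁻¹ + 2 * m' x⁻¹) / x ^ 3)
    (fun x hx => (hm x⁻¹ (inv_pos.2 hx)).comp x (hasDerivAt_inv hx.ne'))
    (fun x hx => ?_) (fun x hx => div_nonneg (h x⁻¹ (inv_pos.2 hx)) (pow_pos hx 3).le)
  have hsq := ((hasDerivAt_pow 2 x).inv (pow_ne_zero 2 hx.ne')).neg
  refine (((hm' x⁻¹ (inv_pos.2 hx)).comp x (hasDerivAt_inv hx.ne')).mul hsq).congr_deriv ?_
  simp only [Function.comp_apply, Pi.neg_apply, Pi.inv_apply]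
  field_simp
  ring

section LogDeriv

variable {f ω F : ℝ → ℝ}

theorem exists_ge_logDeriv_neg (hf : ∀ x > 0, 0 < f x)
    (hf' : ∀ x > 0, HasDerivAt f (ω x * f x) x) (hint : IntegrableOn f (Ioi 0)) {a : ℝ}
    (ha : 0 < a) : ∃ t ≥ a, ω t < 0 := by
  by_contra! hω
  have hpos : ∀ t ∈ Ici a, 0 < t := fun t ht => ha.trans_le ht
  have hmono : MonotoneOn f (Ici a) :=
    monotoneOn_of_hasDerivWithinAt_nonneg (convex_Ici a)
      (fun t ht => (hf' t (hpos t ht)).continuousAt.continuousWithinAt)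
      (fun t ht => (hf' t (hpos t (interior_subset ht))).hasDerivWithinAt)
      (fun t ht => mul_nonneg (hω t (interior_subset ht)) (hf t (hpos t (interior_subset ht))).le)
  exact not_integrableOn_Ioi_of_monotoneOn hmono (hf a ha) (hint.mono_set (Ioi_subset_Ioi ha.le))

theorem logDeriv_nonpos (hf : ∀ x > 0, 0 < f x) (hf' : ∀ x > 0, HasDerivAt f (ω x * f x) x)
    (hω : ∀ x > 0, DifferentiableAt ℝ ω x) (hint : IntegrableOn f (Ioi 0))
    (hdec : AntitoneOn (fun x => deriv ω x / ω x ^ 2) (Ioi 0)) {x : ℝ} (hx : 0 < x) :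
    ω x ≤ 0 := by
  by_contra! hωx
  obtain ⟨t, hxt, hωt⟩ := exists_ge_logDeriv_neg hf hf' hint hx
  have hpos : ∀ s ∈ Icc x t, 0 < s := fun s hs => hx.trans_le hs.1
  have hcont : ContinuousOn ω (Icc x t) :=
    fun s hs => (hω s (hpos s hs)).continuousAt.continuousWithinAt
  obtain ⟨c, hc, hωc, hbefore⟩ := exists_first_zero hxt hcont hωx hωt.le
  have hc₀ : 0 < c := hx.trans hc.1
  have hmono : MonotoneOn ω (Icc x c) := by
    refine monotoneOn_of_deriv_nonneg (convex_Icc x c) (hcont.mono (Icc_subset_Icc_right hc.2))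
      (fun s hs => (hω s (hpos s ⟨(interior_subset hs).1, (interior_subset hs).2.trans hc.2⟩))
        |>.differentiableWithinAt) fun s hs => ?_
    rw [interior_Icc] at hs
    have hsq : 0 < ω s ^ 2 := pow_pos (hbefore s ⟨hs.1.le, hs.2⟩) 2
    have hg := hdec (hx.trans hs.1) hc₀ hs.2.le
    -- at the zero `c`, Lean's `deriv ω c / 0 = 0` is what makes `hdec` give `0 ≤ ω′ s / ω s ^ 2`
    simp only [hωc, zero_pow two_ne_zero, div_zero] at hg
    simpa using (le_div_iff₀ hsq).1 hg
  linarith [hmono (left_mem_Icc.2 hc.1.le) (right_mem_Icc.2 hc.1.le) hc.1.le]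

theorem logDeriv_neg (hf : ∀ x > 0, 0 < f x) (hf' : ∀ x > 0, HasDerivAt f (ω x * f x) x)
    (hω : ∀ x > 0, DifferentiableAt ℝ ω x) (hint : IntegrableOn f (Ioi 0))
    (hdec : AntitoneOn (fun x => deriv ω x / ω x ^ 2) (Ioi 0))
    (hinc : MonotoneOn
      (fun x => x ^ 3 * deriv ω x / (x * ω x ^ 2 - x * deriv ω x - 2 * ω x)) (Ioi 0))
    {x : ℝ} (hx : 0 < x) : ω x < 0 := by
  have hnonpos : ∀ t > 0, ω t ≤ 0 := fun t ht => logDeriv_nonpos hf hf' hω hint hdec ht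
  refine (hnonpos x hx).lt_of_ne fun hωx => ?_
  have hcrit : ∀ t > 0, ω t = 0 → deriv ω t = 0 := fun t ht hωt =>
    IsLocalMax.deriv_eq_zero <| by
      filter_upwards [Ioi_mem_nhds ht] with s hs
      exact hωt ▸ hnonpos s hs
  have hderiv : ∀ t ≥ x, deriv ω t = 0 := by
    intro t ht
    have ht₀ : 0 < t := hx.trans_le ht
    rcases (hnonpos t ht₀).eq_or_lt with hωt | hωt
    · exact hcrit t ht₀ hωt
    have hsq : 0 < ω t ^ 2 := sq_pos_of_neg hωt
    -- both monotone quotients vanish at `x`: `g x = ω′ x / 0 = 0` and `q x = 0` since `ω′ x = 0`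
    have hg : deriv ω t / ω t ^ 2 ≤ 0 := by simpa [hωx] using hdec hx ht₀ ht
    have hq : 0 ≤ t ^ 3 * deriv ω t / (t * ω t ^ 2 - t * deriv ω t - 2 * ω t) := by
      simpa [hcrit x hx hωx] using hinc hx ht₀ ht
    have hω'le : deriv ω t ≤ 0 := by simpa using (div_le_iff₀ hsq).1 hg
    have hD : 0 < t * ω t ^ 2 - t * deriv ω t - 2 * ω t := by nlinarith
    have hω'ge : 0 ≤ t ^ 3 * deriv ω t := by simpa using (le_div_iff₀ hD).1 hq
    nlinarith [pow_pos ht₀ 3]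
  have hconst : ∀ t ≥ x, ω t = 0 := fun t ht => by
    rw [← hωx]
    refine constant_of_has_deriv_right_zero
      (fun s hs => (hω s (hx.trans_le hs.1)).continuousAt.continuousWithinAt)
      (fun s hs => ?_) t (right_mem_Icc.2 ht)
    rw [← hderiv s hs.1]
    exact (hω s (hx.trans_le hs.1)).hasDerivAt.hasDerivWithinAt
  obtain ⟨t, ht, hωt⟩ := exists_ge_logDeriv_neg hf hf' hint hx
  exact hωt.ne (hconst t ht)

theorem hasDerivAt_div_logDeriv {x : ℝ} (hf' : HasDerivAt f (ω x * f x) x)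
    (hω : DifferentiableAt ℝ ω x) (hωx : ω x ≠ 0) :
    HasDerivAt (fun t => f t / ω t) (f x * (1 - deriv ω x / ω x ^ 2)) x := by
  refine (hf'.div hω.hasDerivAt hωx).congr_deriv ?_
  field_simp

theorem hasDerivAt_millsRatio {x : ℝ} (hF : HasDerivAt F (-f x) x)
    (hf' : HasDerivAt f (ω x * f x) x) (hfx : f x ≠ 0) :
    HasDerivAt (fun t => F t / f t) (-1 - ω x * (F x / f x)) x :=
  (hF.div hf' hfx).congr_deriv (by field_simp)

theorem hasDerivAt_millsRatio_deriv {x : ℝ} (hF : HasDerivAt F (-f x) x)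
    (hf' : HasDerivAt f (ω x * f x) x) (hω : DifferentiableAt ℝ ω x) (hfx : f x ≠ 0) :
    HasDerivAt (fun t => -1 - ω t * (F t / f t)) (F x / f x * (ω x ^ 2 - deriv ω x) + ω x) x :=
  ((hasDerivAt_const x (-1)).sub (hω.hasDerivAt.mul (hasDerivAt_millsRatio hF hf' hfx)))
    |>.congr_deriv (by ring)

theorem mul_sq_sub_mul_deriv_sub_two_mul_pos (hω : ∀ x > 0, DifferentiableAt ℝ ω x)
    (hneg : ∀ x > 0, ω x < 0) (hdec : AntitoneOn (fun x => deriv ω x / ω x ^ 2) (Ioi 0))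
    {t : ℝ} (ht : 0 < t) : 0 < t * ω t ^ 2 - t * deriv ω t - 2 * ω t := by
  have hφ : t * (deriv ω t / ω t ^ 2) ≤ -(ω t)⁻¹ :=
    mul_le_of_hasDerivAt_of_antitoneOn (φ := fun s => -(ω s)⁻¹)
      (fun s hs => (((hω s hs).hasDerivAt.inv (hneg s hs).ne).neg).congr_deriv (by ring))
      (fun s hs => (neg_pos.2 (inv_lt_zero.2 (hneg s hs))).le) hdec ht
  have hsq := sq_pos_of_neg (hneg t ht)
  have : t * deriv ω t ≤ -ω t := by
    have h := mul_le_mul_of_nonneg_right hφ hsq.le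
    rwa [mul_assoc, div_mul_cancel₀ _ hsq.ne', neg_mul, sq,
      inv_mul_cancel_left₀ (hneg t ht).ne] at h
  nlinarith [hneg t ht]

theorem millsRatio_deriv2_nonpos (hf : ∀ x > 0, 0 < f x)
    (hf' : ∀ x > 0, HasDerivAt f (ω x * f x) x) (hω : ∀ x > 0, DifferentiableAt ℝ ω x)
    (hneg : ∀ x > 0, ω x < 0) (hF : ∀ x > 0, HasDerivAt F (-f x) x)
    (hF_lim : Tendsto F atTop (𝓝 0)) (hlim : Tendsto (fun x => f x / ω x) atTop (𝓝 0))
    (hdec : AntitoneOn (fun x => deriv ω x / ω x ^ 2) (Ioi 0)) {y : ℝ} (hy : 0 < y) :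
    F y / f y * (ω y ^ 2 - deriv ω y) + ω y ≤ 0 := by
  have hG : 0 ≤ -(f y / ω y) - (1 - deriv ω y / ω y ^ 2) * F y := by
    refine nonneg_of_hasDerivAt_nonpos_of_tendsto
      (G := fun t => -(f t / ω t) - (1 - deriv ω y / ω y ^ 2) * F t)
      (G' := fun t => f t * (deriv ω t / ω t ^ 2 - deriv ω y / ω y ^ 2))
      (fun t ht => ?_) (fun t ht => ?_) ?_
    · have ht₀ : 0 < t := hy.trans_le ht
      exact ((hasDerivAt_div_logDeriv (hf' t ht₀) (hω t ht₀) (hneg t ht₀).ne).neg.sub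
        ((hF t ht₀).const_mul _)).congr_deriv (by ring)
    · exact mul_nonpos_of_nonneg_of_nonpos (hf t (hy.trans_le ht)).le
        (sub_nonpos.2 (hdec hy (hy.trans_le ht) ht))
    · simpa using hlim.neg.sub (hF_lim.const_mul (1 - deriv ω y / ω y ^ 2))
  have hfy := hf y hy
  have hωy := (hneg y hy).ne
  have hfactor : F y / f y * (ω y ^ 2 - deriv ω y) + ω y
      = -(ω y ^ 2 / f y) * (-(f y / ω y) - (1 - deriv ω y / ω y ^ 2) * F y) := by
    field_simp
    ring
  rw [hfactor]
  exact mul_nonpos_of_nonpos_of_nonneg (neg_nonpos.2 (by positivity)) hG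

theorem millsRatio_inv_deriv2_nonneg (hf : ∀ x > 0, 0 < f x)
    (hf' : ∀ x > 0, HasDerivAt f (ω x * f x) x) (hω : ∀ x > 0, DifferentiableAt ℝ ω x)
    (hneg : ∀ x > 0, ω x < 0) (hF : ∀ x > 0, HasDerivAt F (-f x) x)
    (hF_lim : Tendsto F atTop (𝓝 0)) (hlim : Tendsto (fun x => f x / ω x) atTop (𝓝 0))
    (hdec : AntitoneOn (fun x => deriv ω x / ω x ^ 2) (Ioi 0))
    (hinc : MonotoneOn
      (fun x => x ^ 3 * deriv ω x / (x * ω x ^ 2 - x * deriv ω x - 2 * ω x)) (Ioi 0))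
    {y : ℝ} (hy : 0 < y) :
    0 ≤ y * (F y / f y * (ω y ^ 2 - deriv ω y) + ω y) + 2 * (-1 - ω y * (F y / f y)) := by
  have hD : ∀ t > 0, 0 < t * ω t ^ 2 - t * deriv ω t - 2 * ω t :=
    fun t ht => mul_sq_sub_mul_deriv_sub_two_mul_pos hω hneg hdec ht
  set q : ℝ → ℝ := fun x => x ^ 3 * deriv ω x / (x * ω x ^ 2 - x * deriv ω x - 2 * ω x)
  have hqD : ∀ t > 0, q t * (t * ω t ^ 2 - t * deriv ω t - 2 * ω t) = t ^ 3 * deriv ω t :=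
    fun t ht => div_mul_cancel₀ _ (hD t ht).ne'
  have hG : 0 ≤ F y + f y / ω y * (1 + q y / y ^ 2) := by
    refine nonneg_of_hasDerivAt_nonpos_of_tendsto
      (G := fun t => F t + f t / ω t * (1 + q y / t ^ 2))
      (G' := fun t => f t * (q y * (t * ω t ^ 2 - t * deriv ω t - 2 * ω t) - t ^ 3 * deriv ω t)
        / (ω t ^ 2 * t ^ 3))
      (fun t ht => ?_) (fun t ht => ?_) ?_
    · have ht₀ : 0 < t := hy.trans_le ht
      have hωt := (hneg t ht₀).ne
      refine ((hF t ht₀).add ((hasDerivAt_div_logDeriv (hf' t ht₀) (hω t ht₀) hωt).mul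
        ((hasDerivAt_const t 1).add ((hasDerivAt_const t (q y)).div (hasDerivAt_pow 2 t)
          (pow_ne_zero 2 ht₀.ne'))))).congr_deriv ?_
      simp only [Pi.add_apply, Pi.div_apply]
      field_simp
      ring
    · have ht₀ : 0 < t := hy.trans_le ht
      rw [← hqD t ht₀, ← sub_mul]
      refine div_nonpos_of_nonpos_of_nonneg (mul_nonpos_of_nonneg_of_nonpos (hf t ht₀).le ?_)
        (by positivity)
      exact mul_nonpos_of_nonpos_of_nonneg (sub_nonpos.2 (hinc hy ht₀ ht)) (hD t ht₀).le
    · simpa using hF_lim.add (hlim.mul (tendsto_const_nhds.add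
        (tendsto_const_nhds.div_atTop (tendsto_pow_atTop two_ne_zero))))
  have hfy := hf y hy
  have hωy := (hneg y hy).ne
  have hfactor : y * (F y / f y * (ω y ^ 2 - deriv ω y) + ω y) + 2 * (-1 - ω y * (F y / f y))
      = (y * ω y ^ 2 - y * deriv ω y - 2 * ω y) / f y * (F y + f y / ω y * (1 + q y / y ^ 2)) := by
    calc _ = (y * ω y ^ 2 - y * deriv ω y - 2 * ω y) / f y * F y
          + ((y * ω y ^ 2 - y * deriv ω y - 2 * ω y) * y ^ 2 + y ^ 3 * deriv ω y)
            / (ω y * y ^ 2) := by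
          field_simp
          ring
      _ = _ := by
          rw [← hqD y hy]
          field_simp
  rw [hfactor]
  exact mul_nonneg (div_nonneg (hD y hy).le hfy.le) hG

end LogDeriv

/-- **Theorem 2(a), reciprocal convexity.** Let `f : (0,∞) → (0,∞)` be a twice
differentiable probability density with logarithmic derivative `ω = f′/f`, survival
function `F̄(x) = ∫ₓ^∞ f`, and Mills ratio `m = F̄/f`. If `f/ω → 0` at `∞`,
`ω′/ω²` is decreasing on `(0,∞)`, and `x ↦ x³ω′(x)/(xω(x)² − xω′(x) − 2ω(x))` is
increasing on `(0,∞)`, then `m` is reciprocally convex on `(0,∞)`: `m` is concave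
on `(0,∞)` and `x ↦ m(1/x)` is convex on `(0,∞)`. -/
theorem millsRatio_reciprocally_convex (f ω Fbar m : ℝ → ℝ)
    (hf_pos : ∀ x ∈ Set.Ioi (0 : ℝ), 0 < f x)
    (hf_diff : ∀ x ∈ Set.Ioi (0 : ℝ), DifferentiableAt ℝ f x)
    (hf_diff2 : ∀ x ∈ Set.Ioi (0 : ℝ), DifferentiableAt ℝ (deriv f) x)
    (hf_pdf : ∫ t in Set.Ioi (0 : ℝ), f t = 1)
    (hω : ∀ x, ω x = deriv f x / f x)
    (hFbar : ∀ x, Fbar x = ∫ t in Set.Ioi x, f t)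
    (hm : ∀ x, m x = Fbar x / f x)
    (hlim : Filter.Tendsto (fun x => f x / ω x) Filter.atTop (nhds 0))
    (hdec : AntitoneOn (fun x => deriv ω x / (ω x) ^ 2) (Set.Ioi 0))
    (hinc : MonotoneOn
      (fun x => x ^ 3 * deriv ω x / (x * (ω x) ^ 2 - x * deriv ω x - 2 * ω x))
      (Set.Ioi 0)) :
    ConcaveOn ℝ (Set.Ioi 0) m ∧ ConvexOn ℝ (Set.Ioi 0) (fun x : ℝ => m (1 / x)) := by
  have hf_int : IntegrableOn f (Ioi 0) := Integrable.of_integral_ne_zero (by simp [hf_pdf])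
  have hf' : ∀ x > 0, HasDerivAt f (ω x * f x) x := fun x hx => by
    rw [hω, div_mul_cancel₀ _ (hf_pos x hx).ne']
    exact (hf_diff x hx).hasDerivAt
  have hω_diff : ∀ x > 0, DifferentiableAt ℝ ω x := fun x hx => by
    rw [show ω = fun x => deriv f x / f x from funext hω]
    exact (hf_diff2 x hx).div (hf_diff x hx) (hf_pos x hx).ne'
  have hneg : ∀ x > 0, ω x < 0 := fun x hx => logDeriv_neg hf_pos hf' hω_diff hf_int hdec hinc hx
  rw [show Fbar = fun x => ∫ t in Ioi x, f t from funext hFbar] at hm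
  have hF' : ∀ x > 0, HasDerivAt (fun x => ∫ t in Ioi x, f t) (-f x) x := fun x hx =>
    hasDerivAt_integral_Ioi hf_int (hf_diff x hx).continuousAt hx
  have hF_lim := tendsto_integral_Ioi_zero (f := f) (μ := volume) tendsto_id
  have hm' := fun x hx => hasDerivAt_millsRatio (hF' x hx) (hf' x hx) (hf_pos x hx).ne'
  have hm'' := fun x hx =>
    hasDerivAt_millsRatio_deriv (hF' x hx) (hf' x hx) (hω_diff x hx) (hf_pos x hx).ne'
  rw [show m = _ from funext hm]
  refine ⟨concaveOn_Ioi_of_hasDerivAt2_nonpos hm' hm'' fun x hx =>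
    millsRatio_deriv2_nonpos hf_pos hf' hω_diff hneg hF' hF_lim hlim hdec hx, ?_⟩
  simpa only [one_div] using convexOn_comp_inv_of_hasDerivAt2 hm' hm'' fun x hx =>
    millsRatio_inv_deriv2_nonneg hf_pos hf' hω_diff hneg hF' hF_lim hlim hdec hinc hx
end

section
/- For 0 < α ≤ 1, the Mills ratio m(·; α) of the gamma distribution is reciprocally convex on (0,∞): m(·; α) is concave on (0,∞) and x ↦ m(1/x; α) is convex on (0,∞). -/
/-- The Mills ratio of the gamma distribution with shape parameter `α`:
`m(x; α) = Γ(α, x)/(x^(α−1) e^(−x))`, where `Γ(α, x) = ∫ₓ^∞ t^(α−1) e^(−t) dt` is the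
upper incomplete gamma function. -/
noncomputable def gammaMills (α x : ℝ) : ℝ :=
  (∫ t in Set.Ioi x, t ^ (α - 1) * Real.exp (-t)) / (x ^ (α - 1) * Real.exp (-x))

open MeasureTheory Set Real

/-!
Substituting `t = x + s` gives `m(x; α) = ∫₀^∞ e^{-s} (1 + s/x)^{α-1} ds`, so both claims
reduce to the integrand. For `p = α - 1 ∈ [-1, 0]`, `(1 + s/x)^p = (x/(x+s))^{-p}` is a
nondecreasing concave power of the concave function `x/(x+s)`, while `(1 + s x)^p` is a
nonpositive, hence convex, power of an affine function; integrating against `e^{-s} ds`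
preserves both properties.
-/

section Composition

variable {E : Type*} [AddCommGroup E] [Module ℝ E] {s : Set E} {t : Set ℝ} {f : E → ℝ}
  {g : ℝ → ℝ}

theorem ConvexOn.comp_of_mapsTo (hg : ConvexOn ℝ t g)
    (hf : ConvexOn ℝ s f) (hg' : MonotoneOn g t) (hst : MapsTo f s t) :
    ConvexOn ℝ s (g ∘ f) :=
  ⟨hf.1, fun _ hx _ hy _ _ ha hb hab =>
    (hg' (hst (hf.1 hx hy ha hb hab)) (hg.1 (hst hx) (hst hy) ha hb hab)
      (hf.2 hx hy ha hb hab)).trans (hg.2 (hst hx) (hst hy) ha hb hab)⟩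

theorem ConcaveOn.comp_of_mapsTo (hg : ConcaveOn ℝ t g)
    (hf : ConcaveOn ℝ s f) (hg' : MonotoneOn g t) (hst : MapsTo f s t) :
    ConcaveOn ℝ s (g ∘ f) :=
  ⟨hf.1, fun _ hx _ hy _ _ ha hb hab =>
    (hg.2 (hst hx) (hst hy) ha hb hab).trans
      (hg' (hg.1 (hst hx) (hst hy) ha hb hab) (hst (hf.1 hx hy ha hb hab))
        (hf.2 hx hy ha hb hab))⟩

end Composition

theorem convexOn_rpow_of_nonpos {p : ℝ} (hp : p ≤ 0) :
    ConvexOn ℝ (Ioi 0) fun y : ℝ => y ^ p := by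
  have hlog : ConvexOn ℝ (Ioi 0) fun y => -p • -log y :=
    strictConcaveOn_log_Ioi.concaveOn.neg.smul (neg_nonneg.2 hp)
  refine (convexOn_exp.comp_of_mapsTo hlog (exp_monotone.monotoneOn _) (mapsTo_univ _ _)).congr
    fun y hy => ?_
  simp [rpow_def_of_pos hy, mul_comm]

theorem concaveOn_div_add_const {c : ℝ} (hc : 0 ≤ c) :
    ConcaveOn ℝ (Ioi (-c)) fun x : ℝ => x / (x + c) := by
  have hinv : ConvexOn ℝ (Ioi (-c)) fun x : ℝ => (x + c)⁻¹ := by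
    simpa [Function.comp_def, add_comm, neg_lt_iff_pos_add] using
      ((convexOn_zpow (𝕜 := ℝ) (-1)).translate_left c)
  refine ((hinv.smul hc).neg.add_const 1).congr fun x (hx : -c < x) => ?_
  have : x + c ≠ 0 := by linarith
  simp only [Pi.add_apply, Pi.neg_apply, smul_eq_mul]
  field_simp
  ring

theorem concaveOn_one_add_div_rpow {c p : ℝ} (hc : 0 ≤ c) (hp₀ : -1 ≤ p) (hp₁ : p ≤ 0) :
    ConcaveOn ℝ (Ioi 0) fun x : ℝ => (1 + c / x) ^ p := by
  have hq₀ : 0 ≤ -p := by linarith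
  have hq₁ : -p ≤ 1 := by linarith
  refine ((concaveOn_rpow hq₀ hq₁).comp_of_mapsTo
    ((concaveOn_div_add_const hc).subset (Ioi_subset_Ioi (by linarith)) (convex_Ioi 0))
    (monotoneOn_rpow_Ici_of_exponent_nonneg hq₀) fun x (hx : 0 < x) => ?_).congr
    fun x (hx : 0 < x) => ?_
  · exact (div_pos hx (by linarith)).le
  · have : x + c ≠ 0 := by linarith
    simp only [Function.comp_apply]
    rw [rpow_neg (by positivity), ← inv_rpow (by positivity), inv_div, add_div, div_self hx.ne']

theorem convexOn_one_add_mul_rpow {c p : ℝ} (hc : 0 ≤ c) (hp : p ≤ 0) :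
    ConvexOn ℝ (Ioi 0) fun x : ℝ => (1 + c * x) ^ p := by
  refine ⟨convex_Ioi 0, fun x (hx : 0 < x) y (hy : 0 < y) a b ha hb hab => ?_⟩
  have h := (convexOn_rpow_of_nonpos hp).2 (by positivity : (0:ℝ) < 1 + c * x)
    (by positivity : (0:ℝ) < 1 + c * y) ha hb hab
  convert h using 2
  simp only [smul_eq_mul]
  linear_combination -hab

section ParametricIntegral

variable {E ι : Type*} [AddCommGroup E] [Module ℝ E] [MeasurableSpace ι] {μ : Measure ι}
  {s : Set E} {f : E → ι → ℝ}

theorem convexOn_integral (hs : Convex ℝ s) (hf : ∀ᵐ t ∂μ, ConvexOn ℝ s (f · t))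
    (hint : ∀ x ∈ s, Integrable (f x) μ) : ConvexOn ℝ s fun x => ∫ t, f x t ∂μ := by
  refine ⟨hs, fun x hx y hy a b ha hb hab => ?_⟩
  calc ∫ t, f (a • x + b • y) t ∂μ ≤ ∫ t, (a * f x t + b * f y t) ∂μ :=
        integral_mono_ae (hint _ (hs hx hy ha hb hab))
          (((hint x hx).const_mul a).add ((hint y hy).const_mul b))
          (hf.mono fun t ht => ht.2 hx hy ha hb hab)
    _ = a • ∫ t, f x t ∂μ + b • ∫ t, f y t ∂μ := by
        rw [integral_add ((hint x hx).const_mul a) ((hint y hy).const_mul b), integral_const_mul,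
          integral_const_mul, smul_eq_mul, smul_eq_mul]

theorem concaveOn_integral (hs : Convex ℝ s) (hf : ∀ᵐ t ∂μ, ConcaveOn ℝ s (f · t))
    (hint : ∀ x ∈ s, Integrable (f x) μ) : ConcaveOn ℝ s fun x => ∫ t, f x t ∂μ := by
  have h := convexOn_integral (f := -f) hs (hf.mono fun t ht => ht.neg)
    fun x hx => (hint x hx).neg
  refine neg_convexOn_iff.1 ?_
  simpa [Pi.neg_def, integral_neg] using h

end ParametricIntegral

theorem integrableOn_exp_neg_mul_rpow {g : ℝ → ℝ} {p : ℝ} (hg : Measurable g)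
    (hg₁ : ∀ s ∈ Ioi 0, 1 ≤ g s) (hp : p ≤ 0) :
    IntegrableOn (fun s => exp (-s) * g s ^ p) (Ioi 0) := by
  have hexp : IntegrableOn (fun s : ℝ => exp (-s)) (Ioi 0) := by
    simpa using exp_neg_integrableOn_Ioi 0 one_pos
  refine hexp.mul_bdd (c := 1) (hg.pow_const p).aestronglyMeasurable ?_
  filter_upwards [ae_restrict_mem measurableSet_Ioi] with s hs
  rw [norm_of_nonneg (rpow_nonneg (zero_le_one.trans (hg₁ s hs)) p)]
  exact rpow_le_one_of_one_le_of_nonpos (hg₁ s hs) hp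

theorem setIntegral_Ioi_eq_setIntegral_Ioi_zero_add {F : Type*} [NormedAddCommGroup F]
    [NormedSpace ℝ F] (f : ℝ → F) (x : ℝ) :
    ∫ t in Ioi x, f t = ∫ s in Ioi 0, f (s + x) := by
  have h := (measurableEmbedding_addRight x).setIntegral_map (μ := volume) f (Ioi x)
  rw [map_add_right_eq_self] at h
  rw [h, show (· + x) ⁻¹' Ioi x = Ioi (0 : ℝ) by ext; simp]

theorem gammaMills_eq_integral (α : ℝ) {x : ℝ} (hx : 0 < x) :
    gammaMills α x = ∫ s in Ioi 0, exp (-s) * (1 + s / x) ^ (α - 1) := by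
  have hfactor : ∀ s ∈ Ioi (0 : ℝ), (s + x) ^ (α - 1) * exp (-(s + x))
      = (exp (-s) * (1 + s / x) ^ (α - 1)) * (x ^ (α - 1) * exp (-x)) := by
    intro s (hs : 0 < s)
    have : 1 + s / x = (s + x) / x := by field_simp; ring
    rw [this, div_rpow (by positivity) hx.le, neg_add, exp_add]
    field_simp
  rw [gammaMills, setIntegral_Ioi_eq_setIntegral_Ioi_zero_add,
    setIntegral_congr_fun measurableSet_Ioi hfactor, integral_mul_const,
    mul_div_cancel_right₀ _ (by positivity)]

theorem gammaMills_one_div_eq_integral (α : ℝ) {x : ℝ} (hx : 0 < x) :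
    gammaMills α (1 / x) = ∫ s in Ioi 0, exp (-s) * (1 + s * x) ^ (α - 1) := by
  simp only [gammaMills_eq_integral α (one_div_pos.2 hx), div_div_eq_mul_div, div_one]

/-- For `0 < α ≤ 1`, the Mills ratio `m(·; α)` of the gamma distribution is reciprocally
convex on `(0,∞)`: `m(·; α)` is concave on `(0,∞)` and `x ↦ m(1/x; α)` is convex on
`(0,∞)`. -/
theorem gammaMills_reciprocally_convex (α : ℝ) (hα₀ : 0 < α) (hα₁ : α ≤ 1) :
    ConcaveOn ℝ (Set.Ioi 0) (gammaMills α) ∧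
      ConvexOn ℝ (Set.Ioi 0) (fun x : ℝ => gammaMills α (1 / x)) := by
  have hp : α - 1 ≤ 0 := by linarith
  have hpos : ∀ᵐ s ∂(volume.restrict (Ioi (0 : ℝ))), 0 < s :=
    ae_restrict_mem measurableSet_Ioi
  constructor
  · refine (concaveOn_integral (convex_Ioi 0) ?_ fun x (hx : 0 < x) => ?_).congr
      fun x (hx : 0 < x) => (gammaMills_eq_integral α hx).symm
    · filter_upwards [hpos] with s hs
      exact (concaveOn_one_add_div_rpow hs.le (by linarith) hp).smul (exp_pos _).le
    · exact integrableOn_exp_neg_mul_rpow (by fun_prop)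
        (fun s (hs : 0 < s) => le_add_of_nonneg_right (by positivity)) hp
  · refine (convexOn_integral (convex_Ioi 0) ?_ fun x (hx : 0 < x) => ?_).congr
      fun x (hx : 0 < x) => (gammaMills_one_div_eq_integral α hx).symm
    · filter_upwards [hpos] with s hs
      exact (convexOn_one_add_mul_rpow hs.le hp).smul (exp_pos _).le
    · exact integrableOn_exp_neg_mul_rpow (by fun_prop)
        (fun s (hs : 0 < s) => le_add_of_nonneg_right (by positivity)) hp
end
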